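/- Let ρ and σ be states of n qubits such that ρ_Λ = σ_Λ for every region Λ ⊂ [n] of size |Λ| < k. Then ‖ρ − σ‖_{W₁loc} ≤ n / (k c_k). -/

import Mathlib

open Matrix BigOperators
open scoped ComplexOrder

noncomputable section

namespace QW1

variable {ι : Type*} [Fintype ι] [DecidableEq ι]

/-- The space of (not necessarily Hermitian) operators on a system of qubits labelled by `ι`:
matrices indexed by the computational basis `ι → Fin 2`. -/
abbrev QMat (ι : Type*) [Fintype ι] [DecidableEq ι] :=
  Matrix (ι → Fin 2) (ι → Fin 2) ℂ

/-- The operator norm (largest singular value) of a matrix. -/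
noncomputable def opNorm {d : Type*} [Fintype d] [DecidableEq d] (A : Matrix d d ℂ) : ℝ :=
  ⨆ i, Real.sqrt ((Matrix.isHermitian_conjTranspose_mul_self A).eigenvalues i)

/-- The trace norm (sum of singular values) of a matrix. -/
noncomputable def traceNorm {d : Type*} [Fintype d] [DecidableEq d] (A : Matrix d d ℂ) : ℝ :=
  ∑ i, Real.sqrt ((Matrix.isHermitian_conjTranspose_mul_self A).eigenvalues i)

/-- Combine an assignment of basis states on `Λ` and on its complement into one on all of `ι`. -/
def merge (Λ : Finset ι) (f : {x // x ∈ Λ} → Fin 2) (g : {x // x ∉ Λ} → Fin 2) (x : ι) :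
    Fin 2 :=
  if h : x ∈ Λ then f ⟨x, h⟩ else g ⟨x, h⟩

/-- The partial trace over the qubits outside `Λ`, `Tr_{Λᶜ}`, yielding an operator on the
qubits in `Λ`. -/
noncomputable def ptrace (Λ : Finset ι) (A : QMat ι) :
    Matrix ({x // x ∈ Λ} → Fin 2) ({x // x ∈ Λ} → Fin 2) ℂ :=
  fun f g => ∑ h : {x : ι // x ∉ Λ} → Fin 2, A (merge Λ f h) (merge Λ g h)

/-- The extension `M ⊗ I_{Λᶜ}` of an operator `M` on the qubits in `Λ` to all the qubits. -/
def embed (Λ : Finset ι)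
    (M : Matrix ({x // x ∈ Λ} → Fin 2) ({x // x ∈ Λ} → Fin 2) ℂ) : QMat ι :=
  fun f g =>
    (if ∀ x : ι, x ∉ Λ → f x = g x then
      M (fun x => f x.1) (fun x => g x.1) else 0)

/-- `H` acts on (at most) the qubits in `Λ`: it has the form `H_Λ ⊗ I_{Λᶜ}` with `H_Λ`
self-adjoint. -/
def ActsOn (Λ : Finset ι) (H : QMat ι) : Prop :=
  ∃ M, M.IsHermitian ∧ H = embed Λ M

/-- The local quantum norm with penalty coefficients `c`. -/
noncomputable def localNorm (c : ℕ → ℝ) (H : QMat ι) : ℝ :=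
  sInf { r : ℝ | ∃ F : Finset ι → QMat ι, (∀ Λ, ActsOn Λ (F Λ)) ∧ H = ∑ Λ, F Λ ∧
    r = 2 * ⨆ x : ι, ∑ Λ ∈ Finset.univ.filter (fun Λ : Finset ι => x ∈ Λ),
      c Λ.card * opNorm (F Λ) }

/-- The local quantum `W₁` norm: the dual of the local quantum norm. -/
noncomputable def W1loc (c : ℕ → ℝ) (Δ : QMat ι) : ℝ :=
  sSup { r : ℝ | ∃ H : QMat ι, H.IsHermitian ∧ localNorm c H ≤ 1 ∧ r = ((Δ * H).trace).re }

/-- The quantum `W₁` norm of De Palma et al. -/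
noncomputable def W1 (Δ : QMat ι) : ℝ :=
  sInf { r : ℝ | ∃ D : ι → QMat ι,
    (∀ x, (D x).IsHermitian ∧ (D x).trace = 0 ∧ ptrace ({x}ᶜ : Finset ι) (D x) = 0) ∧
    Δ = ∑ x, D x ∧ r = (1 / 2) * ∑ x, traceNorm (D x) }

/-- Tensor product of operators on two disjoint families of qubits. -/
def tensor {κ : Type*} [Fintype κ] [DecidableEq κ] (A : QMat ι) (B : QMat κ) :
    QMat (ι ⊕ κ) :=
  fun f g => A (f ∘ Sum.inl) (g ∘ Sum.inl) * B (f ∘ Sum.inr) (g ∘ Sum.inr)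

/-- Tensor product of single-qubit operators, one for each qubit. -/
def tensorAll (B : ι → Matrix (Fin 2) (Fin 2) ℂ) : QMat ι :=
  fun f g => ∏ j, B j (f j) (g j)

/-- The four Pauli matrices `I, X, Y, Z`. -/
noncomputable def pauli : Fin 4 → Matrix (Fin 2) (Fin 2) ℂ :=
  ![1, !![0, 1; 1, 0], !![0, -Complex.I; Complex.I, 0], !![1, 0; 0, -1]]

/-- The Pauli operator `σ_{a 1} ⊗ ⋯ ⊗ σ_{a n}`. -/
noncomputable def pauliOp (a : ι → Fin 4) : QMat ι :=
  tensorAll fun j => pauli (a j)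

/-- The weight (locality) of a Pauli operator: the number of non-identity factors. -/
def weight (a : ι → Fin 4) : ℕ :=
  (Finset.univ.filter fun j => a j ≠ 0).card

/-- A quantum state: a positive semidefinite matrix of unit trace. (`PosSemidef` is taken with
respect to the complex order.) -/
def IsState (ρ : QMat ι) : Prop :=
  ρ.PosSemidef ∧ ρ.trace = 1

end QW1

namespace QW1

variable {ι : Type*} [Fintype ι] [DecidableEq ι]

/-- The dependence `∂_x H` of the observable `H` on the qubit `x`. -/
noncomputable def dep (x : ι) (H : QMat ι) : ℝ :=
  2 * sInf { r : ℝ | ∃ K : QMat ι, ActsOn ({x}ᶜ : Finset ι) K ∧ r = opNorm (H - K) }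

/-- The quantum Lipschitz constant `‖H‖_L = max_x ∂_x H`. -/
noncomputable def lipNorm (H : QMat ι) : ℝ :=
  ⨆ x : ι, dep x H

/-- Single-qubit unitaries rotating the eigenbases of the Paulis `Z`, `X`, `Y`
to the computational basis. -/
noncomputable def ubasis : Fin 3 → Matrix (Fin 2) (Fin 2) ℂ :=
  ![1,
    (Real.sqrt 2 : ℂ)⁻¹ • !![1, 1; 1, -1],
    (Real.sqrt 2 : ℂ)⁻¹ • !![1, -Complex.I; 1, Complex.I]]

/-- The single-qubit classical shadow `3 U† |b⟩⟨b| U − I`. -/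
noncomputable def shadow1 (w : Fin 3) (b : Fin 2) : Matrix (Fin 2) (Fin 2) ℂ :=
  (3 : ℂ) • ((ubasis w)ᴴ * Matrix.single b b 1 * ubasis w) - 1

/-- The classical shadow `⊗_j (3 U_j† |b_j⟩⟨b_j| U_j − I)` of the Pauli measurement
primitive associated with the sampled basis choices and outcomes `s`. -/
noncomputable def shadowOf (s : ι → Fin 3 × Fin 2) : QMat ι :=
  tensorAll fun j => shadow1 (s j).1 (s j).2

/-- The probability of the sample `s` (a uniformly random Pauli basis measured on each qubit,
with outcomes distributed with the Born probability `⟨b|UρU†|b⟩`) when measuring one copy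
of `ρ` in the Pauli measurement primitive. -/
noncomputable def shadowPMF (ρ : QMat ι) (s : ι → Fin 3 × Fin 2) : ℝ :=
  ((3 : ℝ) ^ Fintype.card ι)⁻¹ *
    (((tensorAll fun j => ubasis (s j).1) * ρ * (tensorAll fun j => ubasis (s j).1)ᴴ)
      (fun j => (s j).2) (fun j => (s j).2)).re

open Classical in
/-- The probability that `N` independent classical shadows of `ρ` (from the Pauli
measurement primitive) satisfy the event `E`. -/
noncomputable def shadowProb (ρ : QMat ι) (N : ℕ)
    (E : (Fin N → ι → Fin 3 × Fin 2) → Prop) : ℝ :=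
  ∑ ω : Fin N → ι → Fin 3 × Fin 2, if E ω then ∏ i, shadowPMF ρ (ω i) else 0

/-- Extension of a single-qubit operator `K` on the qubit `i`, acting as the identity on the
remaining qubits. -/
noncomputable def oneSite (i : ι) (K : Matrix (Fin 2) (Fin 2) ℂ) : QMat ι :=
  tensorAll fun j => if j = i then K else 1

/-- Logarithm of a Hermitian matrix via its spectral decomposition (junk value otherwise). -/
noncomputable def mlog {d : Type*} [Fintype d] [DecidableEq d] (A : Matrix d d ℂ) :
    Matrix d d ℂ :=
  if hA : A.IsHermitian then
    (hA.eigenvectorUnitary : Matrix d d ℂ) *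
      Matrix.diagonal (fun i => (Real.log (hA.eigenvalues i) : ℂ)) *
      star (hA.eigenvectorUnitary : Matrix d d ℂ)
  else 0

/-- The quantum relative entropy `S(ρ‖σ) = Tr[ρ(ln ρ − ln σ)]`. -/
noncomputable def relEnt (ρ σ : QMat ι) : ℝ :=
  ((ρ * (mlog ρ - mlog σ)).trace).re

/-- The Gibbs state `e^{−H} / Tr e^{−H}`. -/
noncomputable def gibbs (H : QMat ι) : QMat ι :=
  ((NormedSpace.exp (-H)).trace)⁻¹ • NormedSpace.exp (-H)

end QW1

open QW1 Matrix Complex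

/-!
Decompose `H = ∑_Λ H_Λ` into local terms. A term on a region smaller than `k` does not
see `ρ - σ`, because the marginals there agree; any other term contributes at most
`2‖H_Λ‖ ≤ 2 |Λ| c_{|Λ|} ‖H_Λ‖ / (k c_k)`. Spreading the penalty `c_{|Λ|} ‖H_Λ‖` of each
term over the `|Λ|` sites of its region and summing over the `n` sites bounds
`Tr[(ρ - σ) H]` by `n / (k c_k)` times twice the largest per-site penalty, and hence by
`n / (k c_k) · ‖H‖_loc`.
-/

namespace QW1

section Spectral

variable {d : Type*} [Fintype d] [DecidableEq d]

lemma opNorm_nonneg (A : Matrix d d ℂ) : 0 ≤ opNorm A :=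
  Real.iSup_nonneg fun _ => Real.sqrt_nonneg _

lemma abs_eigenvalues_le_opNorm {A : Matrix d d ℂ} (hA : A.IsHermitian) (i : d) :
    |hA.eigenvalues i| ≤ opNorm A := by
  have hsq : hA.eigenvalues i ^ 2 ∈ spectrum ℝ (Aᴴ * A) := by
    rw [hA.eq, ← sq]
    exact spectrum.pow_image_subset A 2 ⟨_, hA.eigenvalues_mem_spectrum_real i, rfl⟩
  rw [(isHermitian_conjTranspose_mul_self A).spectrum_real_eq_range_eigenvalues] at hsq
  obtain ⟨j, hj⟩ := hsq
  rw [← Real.sqrt_sq_eq_abs, ← hj]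
  exact le_ciSup (f := fun j => √((isHermitian_conjTranspose_mul_self A).eigenvalues j))
    (Set.finite_range _).bddAbove j

/-- In the eigenbasis of `A`, `Tr[ρA] = ∑ⱼ τⱼⱼ λⱼ` with `τ = U†ρU` positive
semidefinite, so the diagonal entries `τⱼⱼ ≥ 0` sum to `Tr ρ`. -/
lemma abs_re_trace_mul_le {ρ A : Matrix d d ℂ} (hρ : ρ.PosSemidef) (hA : A.IsHermitian) :
    |(ρ * A).trace.re| ≤ ρ.trace.re * opNorm A := by
  set U : Matrix d d ℂ := (hA.eigenvectorUnitary : Matrix d d ℂ)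
  set τ := Uᴴ * ρ * U
  have hτ : ∀ j, 0 ≤ (τ j j).re := fun j =>
    (Complex.nonneg_iff.mp (hρ.conjTranspose_mul_mul_same U).diag_nonneg).1
  have htrace : ∑ j, (τ j j).re = ρ.trace.re := by
    have hUU : U * Uᴴ = 1 := Matrix.mem_unitaryGroup_iff.mp hA.eigenvectorUnitary.2
    have : τ.trace = ρ.trace := by rw [trace_mul_cycle, hUU, one_mul]
    simpa [trace, Complex.re_sum] using congrArg Complex.re this
  have hspec : (ρ * A).trace.re = ∑ j, (τ j j).re * hA.eigenvalues j := by
    conv_lhs => rw [hA.spectral_theorem, Unitary.conjStarAlgAut_apply]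
    rw [← mul_assoc, ← mul_assoc, trace_mul_cycle, ← mul_assoc]
    simp [trace, mul_diagonal, Complex.re_sum, τ, U, star_eq_conjTranspose]
  calc |(ρ * A).trace.re| ≤ ∑ j, (τ j j).re * |hA.eigenvalues j| := by
        rw [hspec]
        refine (Finset.abs_sum_le_sum_abs _ _).trans_eq (Finset.sum_congr rfl fun j _ => ?_)
        rw [abs_mul, abs_of_nonneg (hτ j)]
    _ ≤ ∑ j, (τ j j).re * opNorm A :=
        Finset.sum_le_sum fun j _ =>
          mul_le_mul_of_nonneg_left (abs_eigenvalues_le_opNorm hA j) (hτ j)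
    _ = ρ.trace.re * opNorm A := by rw [← Finset.sum_mul, htrace]

end Spectral

section Locality

variable {ι : Type*} [Fintype ι] [DecidableEq ι] {Λ : Finset ι}

lemma sum_eq_sum_merge {M : Type*} [AddCommMonoid M] (Λ : Finset ι) (F : (ι → Fin 2) → M) :
    ∑ f, F f = ∑ a, ∑ h, F (merge Λ a h) := by
  rw [← (Equiv.piEquivPiSubtypeProd (· ∈ Λ) fun _ => Fin 2).symm.sum_comp,
    Fintype.sum_prod_type]
  rfl

lemma embed_merge_merge (M : Matrix ({x // x ∈ Λ} → Fin 2) ({x // x ∈ Λ} → Fin 2) ℂ)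
    (a b : {x // x ∈ Λ} → Fin 2) (h h' : {x // x ∉ Λ} → Fin 2) :
    embed Λ M (merge Λ a h) (merge Λ b h') = if h = h' then M a b else 0 := by
  have hout : (∀ x, x ∉ Λ → merge Λ a h x = merge Λ b h' x) ↔ h = h' := by
    simp +contextual [merge, funext_iff]
  simp only [embed, hout]
  simp [merge]

lemma trace_mul_embed (A : QMat ι)
    (M : Matrix ({x // x ∈ Λ} → Fin 2) ({x // x ∈ Λ} → Fin 2) ℂ) :
    (A * embed Λ M).trace = (ptrace Λ A * M).trace := by
  calc (A * embed Λ M).trace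
      = ∑ a, ∑ h, ∑ b, ∑ h', A (merge Λ a h) (merge Λ b h') *
          embed Λ M (merge Λ b h') (merge Λ a h) := by
        simp only [trace, diag, mul_apply]
        rw [sum_eq_sum_merge Λ]
        refine Finset.sum_congr rfl fun a _ => Finset.sum_congr rfl fun h _ => ?_
        exact sum_eq_sum_merge Λ _
    _ = ∑ a, ∑ h, ∑ b, A (merge Λ a h) (merge Λ b h) * M b a := by
        simp [embed_merge_merge]
    _ = (ptrace Λ A * M).trace := by
        simp only [trace, diag, mul_apply, ptrace, Finset.sum_mul]
        exact Finset.sum_congr rfl fun a _ => Finset.sum_comm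

lemma ptrace_sub (Λ : Finset ι) (A B : QMat ι) :
    ptrace Λ (A - B) = ptrace Λ A - ptrace Λ B := by
  ext f g
  simp [ptrace, Finset.sum_sub_distrib]

lemma isHermitian_embed {M : Matrix ({x // x ∈ Λ} → Fin 2) ({x // x ∈ Λ} → Fin 2) ℂ}
    (hM : M.IsHermitian) : (embed Λ M).IsHermitian := by
  ext f g
  simp only [conjTranspose_apply, QW1.embed, eq_comm (a := f _)]
  split_ifs
  · exact congrFun (congrFun hM _) _
  · exact star_zero _

lemma ActsOn.isHermitian {H : QMat ι} (hH : ActsOn Λ H) : H.IsHermitian := by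
  obtain ⟨M, hM, rfl⟩ := hH
  exact isHermitian_embed hM

lemma actsOn_zero (Λ : Finset ι) : ActsOn Λ (0 : QMat ι) :=
  ⟨0, isHermitian_zero, by ext; simp [embed]⟩

lemma actsOn_univ {H : QMat ι} (hH : H.IsHermitian) : ActsOn Finset.univ H :=
  ⟨fun f g => H (fun x => f ⟨x, Finset.mem_univ x⟩) (fun x => g ⟨x, Finset.mem_univ x⟩),
    by ext; exact congrFun (congrFun hH _) _, by ext; simp [embed]⟩

lemma exists_actsOn_decomposition {H : QMat ι} (hH : H.IsHermitian) :
    ∃ F : Finset ι → QMat ι, (∀ Λ, ActsOn Λ (F Λ)) ∧ H = ∑ Λ, F Λ := by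
  refine ⟨Pi.single Finset.univ H, fun Λ => ?_, by simp [Finset.sum_pi_single']⟩
  by_cases hΛ : Λ = Finset.univ
  · subst hΛ
    simpa using actsOn_univ hH
  · simpa [Pi.single_apply, hΛ] using actsOn_zero Λ

end Locality

section Marginals

variable {ι : Type*} [Fintype ι] [DecidableEq ι] {ρ σ K : QMat ι} {Λ : Finset ι}
  {c : ℕ → ℝ} {k : ℕ}

lemma re_trace_sub_mul_le (hρ : IsState ρ) (hσ : IsState σ) (hK : K.IsHermitian) :
    ((ρ - σ) * K).trace.re ≤ 2 * opNorm K := by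
  have hρK := abs_re_trace_mul_le hρ.1 hK
  have hσK := abs_re_trace_mul_le hσ.1 hK
  rw [hρ.2, Complex.one_re, one_mul] at hρK
  rw [hσ.2, Complex.one_re, one_mul] at hσK
  rw [sub_mul, trace_sub, Complex.sub_re]
  linarith [abs_le.mp hρK, abs_le.mp hσK]

lemma trace_sub_mul_eq_zero_of_ptrace_eq (hK : ActsOn Λ K) (h : ptrace Λ ρ = ptrace Λ σ) :
    ((ρ - σ) * K).trace = 0 := by
  obtain ⟨M, -, rfl⟩ := hK
  rw [trace_mul_embed, ptrace_sub, h, sub_self, zero_mul, trace_zero]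

variable (hc0 : ∀ j, 1 ≤ j → j ≤ Fintype.card ι → 0 ≤ c j) (hk : 1 ≤ k)
  (hcmono : ∀ j, k ≤ j → j ≤ Fintype.card ι → c k ≤ c j)
  (hρ : IsState ρ) (hσ : IsState σ)
include hc0 hk hcmono hρ hσ

lemma mul_re_trace_sub_mul_le (hmarg : Λ.card < k → ptrace Λ ρ = ptrace Λ σ)
    (hK : ActsOn Λ K) :
    k * c k * ((ρ - σ) * K).trace.re ≤ 2 * ∑ _x ∈ Λ, c Λ.card * opNorm K := by
  have hΛ : Λ.card ≤ Fintype.card ι := Λ.card_le_univ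
  rcases lt_or_ge Λ.card k with hsmall | hlarge
  · rw [trace_sub_mul_eq_zero_of_ptrace_eq hK (hmarg hsmall), Complex.zero_re, mul_zero]
    exact mul_nonneg zero_le_two <| Finset.sum_nonneg fun x hx =>
      mul_nonneg (hc0 _ (Finset.card_pos.mpr ⟨x, hx⟩) hΛ) (opNorm_nonneg K)
  · have hck : 0 ≤ c k := hc0 k hk (hlarge.trans hΛ)
    have hkc : (k : ℝ) * c k ≤ Λ.card * c Λ.card :=
      mul_le_mul (by exact_mod_cast hlarge) (hcmono _ hlarge hΛ) hck (Nat.cast_nonneg _)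
    calc k * c k * ((ρ - σ) * K).trace.re ≤ k * c k * (2 * opNorm K) :=
          mul_le_mul_of_nonneg_left (re_trace_sub_mul_le hρ hσ hK.isHermitian) (by positivity)
      _ ≤ Λ.card * c Λ.card * (2 * opNorm K) :=
          mul_le_mul_of_nonneg_right hkc (mul_nonneg zero_le_two (opNorm_nonneg K))
      _ = 2 * ∑ _x ∈ Λ, c Λ.card * opNorm K := by rw [Finset.sum_const, nsmul_eq_mul]; ring

variable (hmarg : ∀ Λ : Finset ι, Λ.card < k → ptrace Λ ρ = ptrace Λ σ)
include hmarg

lemma mul_re_trace_sub_mul_sum_le {F : Finset ι → QMat ι} (hF : ∀ Λ, ActsOn Λ (F Λ)) :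
    k * c k * ((ρ - σ) * ∑ Λ, F Λ).trace.re ≤ Fintype.card ι *
      (2 * ⨆ x : ι, ∑ Λ ∈ Finset.univ.filter (fun Λ : Finset ι => x ∈ Λ),
        c Λ.card * opNorm (F Λ)) := by
  set g := fun x : ι => ∑ Λ ∈ Finset.univ.filter (fun Λ : Finset ι => x ∈ Λ),
    c Λ.card * opNorm (F Λ)
  calc k * c k * ((ρ - σ) * ∑ Λ, F Λ).trace.re
      = ∑ Λ, k * c k * ((ρ - σ) * F Λ).trace.re := by
        rw [Matrix.mul_sum, trace_sum, Complex.re_sum, Finset.mul_sum]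
    _ ≤ ∑ Λ, 2 * ∑ _x ∈ Λ, c Λ.card * opNorm (F Λ) := Finset.sum_le_sum fun Λ _ =>
        mul_re_trace_sub_mul_le hc0 hk hcmono hρ hσ (hmarg Λ) (hF Λ)
    _ = 2 * ∑ x, g x := by
        rw [← Finset.mul_sum]
        exact congrArg _ (Finset.sum_comm' (by simp))
    _ ≤ 2 * ∑ _x : ι, ⨆ y, g y := by
        gcongr with x
        exact le_ciSup (Set.finite_range g).bddAbove x
    _ = Fintype.card ι * (2 * ⨆ y, g y) := by
        rw [Finset.sum_const, Finset.card_univ, nsmul_eq_mul]; ring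

lemma mul_re_trace_sub_mul_le_mul_localNorm {H : QMat ι} (hH : H.IsHermitian) :
    k * c k * ((ρ - σ) * H).trace.re ≤ Fintype.card ι * localNorm c H := by
  obtain ⟨F₀, hF₀, hH₀⟩ := exists_actsOn_decomposition hH
  rw [localNorm, ← smul_eq_mul (a := (Fintype.card ι : ℝ)),
    ← Real.sInf_smul_of_nonneg (Nat.cast_nonneg _)]
  refine le_csInf (Set.Nonempty.smul_set ⟨_, F₀, hF₀, hH₀, rfl⟩) ?_
  rintro _ ⟨_, ⟨F, hF, rfl, rfl⟩, rfl⟩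
  exact mul_re_trace_sub_mul_sum_le hc0 hk hcmono hρ hσ hmarg hF

end Marginals

end QW1

/-- If the states `ρ` and `σ` have equal marginals on every region of size
less than `k`, then `‖ρ − σ‖_{W₁loc} ≤ n/(k c_k)`. -/
theorem stmt4 {n k : ℕ} (c : ℕ → ℝ) (hc1 : c 1 = 1)
    (hcmono : ∀ k' l, 1 ≤ k' → k' ≤ l → l ≤ n → c k' ≤ c l)
    (hk1 : 1 ≤ k) (hkn : k ≤ n)
    (ρ σ : QMat (Fin n)) (hρ : IsState ρ) (hσ : IsState σ)
    (hmarg : ∀ Λ : Finset (Fin n), Λ.card < k → ptrace Λ ρ = ptrace Λ σ) :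
    W1loc c (ρ - σ) ≤ n / (k * c k) := by
  have hc_ge_one : ∀ j, 1 ≤ j → j ≤ n → 1 ≤ c j := fun j hj hjn => by
    simpa [hc1] using hcmono 1 j le_rfl hj hjn
  have hkc : (0 : ℝ) < k * c k :=
    mul_pos (by exact_mod_cast hk1) (one_pos.trans_le (hc_ge_one k hk1 hkn))
  refine Real.sSup_le ?_ (by positivity)
  rintro _ ⟨H, hH, hloc, rfl⟩
  rw [le_div_iff₀ hkc, mul_comm]
  calc k * c k * ((ρ - σ) * H).trace.re ≤ Fintype.card (Fin n) * localNorm c H :=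
        mul_re_trace_sub_mul_le_mul_localNorm
          (fun j hj hjn => zero_le_one.trans (hc_ge_one j hj (by simpa using hjn))) hk1
          (fun j hkj hjn => hcmono k j hk1 hkj (by simpa using hjn)) hρ hσ hmarg hH
    _ ≤ n := by simpa using mul_le_of_le_one_right n.cast_nonneg hloc
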